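/- arXiv:2501.03042 — 2 statements merged into one kernel-verified Lean document; each statement's English description precedes it below -/
import Mathlib

section
/- Let C and D be rigid monoidal categories with pivotal structures j and j' respectively, and let Φ : C → D be a faithful monoidal functor that preserves the pivotal structure. If j' is spherical, then j is also spherical. -/
/-!
# Statement 1

Let `C` and `D` be rigid monoidal categories with pivotal structures `j` and `j'`
respectively, and let `Φ : C → D` be a faithful monoidal functor that preserves the
pivotal structure.  If `j'` is spherical, then `j` is also spherical.

Conventions: a pivotal structure is a (monoidal) natural isomorphism `Id ≅ (−)**`,
and it is *spherical* if `tr (j_X) = tr (j_{X*})` for all `X`, where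
`tr f := ev_{X*} ∘ (f ⊗ id_{X*}) ∘ coev_X`.  For a monoidal functor `Φ`, the
*duality transformation* `χ_X : Φ(X*) ≅ Φ(X)*` is the canonical comparison
morphism `χ_X = (Φ(ev_X) ⊗ id) ∘ (id ⊗ coev_{Φ(X)})` (which is invertible);
`ξ_X := (χ_X{}^*)^{-1} ∘ χ_{X*} : Φ(X**) ≅ Φ(X)**`, and `Φ` *preserves the pivotal
structure* if `ξ_X ∘ Φ(j_X) = j'_{Φ(X)}` for every `X`.  Mathlib's right duals `Xᘁ`
play the role of the paper's left duals `X^*`.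
-/

open CategoryTheory MonoidalCategory Functor.LaxMonoidal Functor.OplaxMonoidal

namespace FSIndicator

variable {C : Type*} [Category C] [MonoidalCategory C] [RightRigidCategory C]

/-- The double (right-)dual functor `X ↦ X**` of a (right) rigid monoidal category. -/
noncomputable def doubleDualFunctor (C : Type*) [Category C] [MonoidalCategory C]
    [RightRigidCategory C] : C ⥤ C where
  obj X := (Xᘁ)ᘁ
  map f := rightAdjointMate (rightAdjointMate f)
  map_id _ := by simp
  map_comp f g := by simp [comp_rightAdjointMate]

/-- The (left) categorical trace of a morphism `f : X ⟶ X**`. -/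
noncomputable def catTrace {X : C} (f : X ⟶ (Xᘁ)ᘁ) : CategoryTheory.End (𝟙_ C) :=
  η_ X Xᘁ ≫ (f ▷ Xᘁ) ≫ ε_ Xᘁ ((Xᘁ)ᘁ)

/-- A pivotal structure on a rigid monoidal category `C`: a (monoidal) natural
isomorphism `Id_C ≅ (−)**`. -/
noncomputable abbrev Pivotal (C : Type*) [Category C] [MonoidalCategory C]
    [RightRigidCategory C] :=
  𝟭 C ≅ doubleDualFunctor C

/-- A pivotal structure `j` is *spherical* if `tr (j_X) = tr (j_{X*})` for all `X`. -/
noncomputable def IsSpherical (j : Pivotal C) : Prop :=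
  ∀ X : C, catTrace (j.hom.app X) = catTrace (j.hom.app (Xᘁ))

variable {D : Type*} [Category D] [MonoidalCategory D] [RightRigidCategory D]

/-- The duality transformation `χ_X : Φ(X*) ⟶ Φ(X)*` of a monoidal functor `Φ`,
`χ_X = (Φ(ev_X) ⊗ id_{Φ(X)*}) ∘ (id_{Φ(X*)} ⊗ coev_{Φ(X)})` (monoidal structure maps
inserted). -/
noncomputable def dualityTransform (F : C ⥤ D) [F.Monoidal] (X : C) :
    F.obj (Xᘁ) ⟶ (F.obj X)ᘁ :=
  (ρ_ (F.obj (Xᘁ))).inv ≫ (F.obj (Xᘁ) ◁ η_ (F.obj X) ((F.obj X)ᘁ)) ≫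
    (α_ _ _ _).inv ≫ ((μ F (Xᘁ) X ≫ F.map (ε_ X (Xᘁ)) ≫ η F) ▷ ((F.obj X)ᘁ)) ≫
      (λ_ ((F.obj X)ᘁ)).hom

/-- The canonical comparison `ξ_X : Φ(X**) ⟶ Φ(X)**`, defined as
`ξ_X = ((χ_X)^*)⁻¹ ∘ χ_{X*}`; here we use that `(χ_X⁻¹)^* = ((χ_X)^*)⁻¹`. -/
noncomputable def xiTransform (F : C ⥤ D) [F.Monoidal]
    [∀ X : C, IsIso (dualityTransform F X)] (X : C) :
    F.obj ((Xᘁ)ᘁ) ⟶ ((F.obj X)ᘁ)ᘁ :=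
  dualityTransform F (Xᘁ) ≫ rightAdjointMate (inv (dualityTransform F X))

/-- A monoidal functor `Φ` between pivotal rigid monoidal categories *preserves the
pivotal structure* if `ξ_X ∘ Φ(j_X) = j'_{Φ(X)}` for every object `X`. -/
noncomputable def PreservesPivotal (F : C ⥤ D) [F.Monoidal]
    [∀ X : C, IsIso (dualityTransform F X)] (j : Pivotal C) (j' : Pivotal D) : Prop :=
  ∀ X : C, F.map (j.hom.app X) ≫ xiTransform F X = j'.hom.app (F.obj X)

/-!
The comparison `χ_X : Φ(X*) ⟶ Φ(X)*` is the mate of `Φ(ev_X)`; since `Φ` carries the zigzag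
identities of `(X, X*)` to those of `(Φ X, Φ(X*))`, `χ` matches `Φ(coev_X)` with `coev_{Φ X}`
as well. Hence `Φ` carries `tr (j_X)` to `tr (ξ_X ∘ Φ(j_X)) = tr (j'_{Φ X})`, up to the unit
comparison `Φ(𝟙) ≅ 𝟙`. The trace of `j'` is invariant under conjugation by the isomorphism `χ_X`
(naturality of `j'`), so `tr (j'_{Φ(X)*}) = tr (j'_{Φ(X*)})`, which is the image of `tr (j_{X*})`.
Sphericity of `j'` at `Φ X` thus gives `Φ(tr j_X) = Φ(tr j_{X*})`, and faithfulness concludes.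
-/

section MapExactPairing

open Functor.Monoidal

variable {C' : Type*} [Category C'] [MonoidalCategory C']
variable {D' : Type*} [Category D'] [MonoidalCategory D'] (F : C' ⥤ D') [F.Monoidal]

noncomputable def mapEvaluation (X Y : C') [ExactPairing X Y] : F.obj Y ⊗ F.obj X ⟶ 𝟙_ D' :=
  μ F Y X ≫ F.map (ε_ X Y) ≫ η F

noncomputable def mapCoevaluation (X Y : C') [ExactPairing X Y] : 𝟙_ D' ⟶ F.obj X ⊗ F.obj Y :=
  ε F ≫ F.map (η_ X Y) ≫ δ F X Y

theorem mapEvaluation_mapCoevaluation (X Y : C') [ExactPairing X Y] :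
    mapCoevaluation F X Y ▷ F.obj X ≫ (α_ _ _ _).hom ≫ F.obj X ◁ mapEvaluation F X Y =
      (λ_ _).hom ≫ (ρ_ _).inv := by
  -- the outer whiskerings cancel the comparison maps `F.map` introduces at the two unitors
  have h := (ε F ▷ F.obj X ≫ μ F _ X) ≫= congrArg F.map (ExactPairing.evaluation_coevaluation X Y)
    =≫ (δ F X (𝟙_ C') ≫ F.obj X ◁ η F)
  simp only [Functor.map_comp, map_whiskerRight, map_whiskerLeft, map_associator, map_leftUnitor,
    map_rightUnitor_inv, Category.assoc, μ_δ_assoc, whiskerRight_ε_η_assoc, whiskerLeft_ε_η,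
    Category.comp_id] at h
  simpa only [mapEvaluation, mapCoevaluation, comp_whiskerRight, MonoidalCategory.whiskerLeft_comp,
    Category.assoc] using h

end MapExactPairing

theorem catTrace_eq_of_comp_eq {A B : C} (g : A ⟶ B) [IsIso g] {h : A ⟶ (Aᘁ)ᘁ}
    {h' : B ⟶ (Bᘁ)ᘁ} (w : g ≫ h' = h ≫ (gᘁ)ᘁ) : catTrace h' = catTrace h := by
  obtain rfl : h' = inv g ≫ h ≫ (gᘁ)ᘁ := (IsIso.eq_inv_comp g).mpr w
  rw [catTrace, catTrace]
  simp only [comp_whiskerRight, Category.assoc]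
  rw [rightAdjointMate_comp_evaluation (gᘁ)]
  slice_lhs 3 4 => rw [← whisker_exchange]
  slice_lhs 2 3 => rw [← whisker_exchange]
  slice_lhs 1 2 => rw [coevaluation_comp_rightAdjointMate g]
  simp

section DualityTransform

variable (F : C ⥤ D) [F.Monoidal]

theorem dualityTransform_whiskerRight_comp_evaluation (X : C) :
    dualityTransform F X ▷ F.obj X ≫ ε_ (F.obj X) (F.obj X)ᘁ = mapEvaluation F X Xᘁ := by
  apply_fun tensorRightHomEquiv _ (F.obj X) (F.obj X)ᘁ _
  rw [tensorRightHomEquiv_whiskerRight_comp_evaluation]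
  simp [dualityTransform, tensorRightHomEquiv, mapEvaluation]

theorem mapCoevaluation_comp_whiskerLeft_dualityTransform (X : C) :
    mapCoevaluation F X Xᘁ ≫ F.obj X ◁ dualityTransform F X = η_ (F.obj X) (F.obj X)ᘁ := by
  apply (tensorRightHomEquiv (𝟙_ D) (F.obj X) (F.obj X)ᘁ (F.obj X)).symm.injective
  simp only [tensorRightHomEquiv, Equiv.coe_fn_symm_mk, comp_whiskerRight, Category.assoc,
    associator_naturality_middle_assoc, ← MonoidalCategory.whiskerLeft_comp_assoc,
    dualityTransform_whiskerRight_comp_evaluation, ExactPairing.evaluation_coevaluation_assoc]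
  rw [reassoc_of% mapEvaluation_mapCoevaluation]

theorem catTrace_map_comp_xiTransform [∀ X : C, IsIso (dualityTransform F X)] {X : C}
    (f : X ⟶ (Xᘁ)ᘁ) :
    catTrace (F.map f ≫ xiTransform F X) = ε F ≫ F.map (catTrace f) ≫ η F := by
  have coev : η_ (F.obj X) (F.obj X)ᘁ ≫ F.obj X ◁ inv (dualityTransform F X) =
      mapCoevaluation F X Xᘁ := by
    rw [← mapCoevaluation_comp_whiskerLeft_dualityTransform, Category.assoc,
      ← MonoidalCategory.whiskerLeft_comp, IsIso.hom_inv_id, MonoidalCategory.whiskerLeft_id,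
      Category.comp_id]
  rw [catTrace, xiTransform]
  simp only [comp_whiskerRight, Category.assoc]
  rw [rightAdjointMate_comp_evaluation (inv (dualityTransform F X))]
  slice_lhs 3 4 => rw [← whisker_exchange]
  slice_lhs 2 3 => rw [← whisker_exchange]
  slice_lhs 1 2 => rw [coev]
  slice_lhs 3 4 => rw [dualityTransform_whiskerRight_comp_evaluation]
  simp [mapCoevaluation, mapEvaluation, catTrace]

end DualityTransform

/-- **(Proposition 2.6.)**  Let `C` and `D` be rigid monoidal categories with pivotal
structures `j` and `j'`, and suppose the faithful monoidal functor `Φ : C ⥤ D`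
preserves the pivotal structure.  If `j'` is spherical then so is `j`. -/
theorem isSpherical_of_faithful_preservesPivotal
    (F : C ⥤ D) [F.Monoidal] [F.Faithful] [∀ X : C, IsIso (dualityTransform F X)]
    (j : Pivotal C) (j' : Pivotal D)
    (hpres : PreservesPivotal F j j') (hsph : IsSpherical j') : IsSpherical j := by
  intro X
  have trace_map (Y : C) :
      catTrace (j'.hom.app (F.obj Y)) = ε F ≫ F.map (catTrace (j.hom.app Y)) ≫ η F := by
    rw [← hpres Y]
    exact catTrace_map_comp_xiTransform F (j.hom.app Y)
  have trace_dual : catTrace (j'.hom.app (F.obj X)ᘁ) = catTrace (j'.hom.app (F.obj Xᘁ)) :=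
    catTrace_eq_of_comp_eq (dualityTransform F X) (j'.hom.naturality _)
  have key := hsph (F.obj X)
  rw [trace_dual, trace_map, trace_map] at key
  apply F.map_injective
  rw [← cancel_epi (ε F), ← cancel_mono (η F)]
  simpa using key

end FSIndicator
end

section
/- Let (F, G, ▷, ◁) be a matched pair of finite groups, and let ℂ^G # ℂF be the associated bismash product Hopf algebra. For a ∈ F, let ℂ^G # p_a denote the left ℂ^G#ℂF-module with underlying space ℂ^G ⊗ ℂp_a induced from the 1-dimensional ℂ^F-representation ℂp_a. Then for every n ≥ 1, ν_n(ℂ^G # p_a) = |{x ∈ G : (a, x)^n = (1, 1) in F ⋈ G}|. -/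
/-!
# Statement 17

Let `(F, G, ▷, ◁)` be a matched pair of finite groups and let `ℂ^G # ℂF` be the
associated bismash product Hopf algebra.  For `a ∈ F`, let `ℂ^G # p_a` denote the
left `ℂ^G#ℂF`-module with underlying space `ℂ^G ⊗ ℂp_a` induced from the
1-dimensional `ℂ^F`-representation `ℂp_a`.  Then for every `n ≥ 1`,
`ν_n(ℂ^G # p_a) = |{ x ∈ G : (a, x)^n = (1, 1) in F ⋈ G }|`.

**Formalization.**  The bismash product Hopf algebra (which arises as the left
partially dualized Hopf algebra of `ℂ^{F ⋈ G}` with respect to the left coideal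
subalgebra `B = ℂ^F`, Lemma 5.6 of the paper) is presented as an abstract Hopf
algebra `K` over `ℂ` with a basis `bas (y, s)` (`y ∈ G`, `s ∈ F`), whose
multiplication, comultiplication and counit are given by the matched-pair structure
constants
`bas (y,s) · bas (z,t) = δ_{s, z ▷ t} · bas (yz, t)`,
`Δ (bas (y,s)) = Σ_{b b' = s} bas (y, b) ⊗ bas (y ◁ b, b')`,
`ε (bas (y,s)) = δ_{s,1}`.
The module `ℂ^G # p_a` is presented as the representation `ρ` of `K` on `G → ℂ`
determined by `bas (y,s) · e_z = δ_{s, z ▷ a} · e_{yz}` on the standard basis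
(this is the module `C^* # L` for the 1-dimensional `ℂ^F`-representation
`L = ℂ p_a`).  The indicator is `ν_n(V) = χ_V(Λ^{[n]})` where `Λ` is the normalized
integral of `K`, and `(a, x)^n` is computed in the bicrossed product group `F ⋈ G`
with multiplication `(a,x)(b,y) = (a (x ▷ b), (x ◁ b) y)`.
-/

open scoped TensorProduct

namespace FSIndicator

/-- The `n`-th Sweedler power map `a ↦ a^{[n]} = Σ a_{(1)} a_{(2)} ⋯ a_{(n)}` of a
bialgebra (`a^{[0]} = ε(a)1`). -/
noncomputable def sweedlerPower (R A : Type*) [CommSemiring R] [Semiring A]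
    [Bialgebra R A] : ℕ → A →ₗ[R] A
  | 0 => Algebra.linearMap R A ∘ₗ Coalgebra.counit
  | n + 1 => LinearMap.mul' R A ∘ₗ
      TensorProduct.map LinearMap.id (sweedlerPower R A n) ∘ₗ Coalgebra.comul

/-- `Λ` is a normalized (left) integral: `h Λ = ε(h) Λ` for all `h`, and `ε(Λ) = 1`. -/
def IsNormalizedIntegral (R : Type*) {H : Type*} [CommSemiring R] [Semiring H]
    [Bialgebra R H] (Λ : H) : Prop :=
  (∀ h : H, h * Λ = Coalgebra.counit (R := R) h • Λ) ∧
    Coalgebra.counit (R := R) Λ = (1 : R)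

/-- The `n`-th Frobenius–Schur indicator `ν_n(V) = χ_V(Λ^{[n]})` of a representation
`ρ` of a semisimple Hopf algebra over `ℂ` with normalized integral `Λ`. -/
noncomputable def nuRep {H : Type*} [Semiring H] [Bialgebra ℂ H] (Λ : H)
    {V : Type*} [AddCommGroup V] [Module ℂ V]
    (ρ : H →ₐ[ℂ] Module.End ℂ V) (n : ℕ) : ℂ :=
  LinearMap.trace ℂ V (ρ (sweedlerPower ℂ H n Λ))

/-- A matched pair of groups `(F, G, ▷, ◁)`: a left action `▷` of `G` on (the set)
`F` and a right action `◁` of `F` on (the set) `G` satisfying the matched-pair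
compatibility conditions. -/
structure MatchedPair (F G : Type*) [Group F] [Group G] where
  /-- the action `x ▷ b` -/
  tr : G → F → F
  /-- the action `x ◁ b` -/
  tl : G → F → G
  one_tr : ∀ b, tr 1 b = b
  mul_tr : ∀ x y b, tr (x * y) b = tr x (tr y b)
  tl_one : ∀ x, tl x 1 = x
  tl_mul : ∀ x b c, tl x (b * c) = tl (tl x b) c
  tr_one : ∀ x, tr x 1 = 1
  one_tl : ∀ b, tl 1 b = 1
  tr_mul_compat : ∀ x b c, tr x (b * c) = tr x b * tr (tl x b) c
  mul_tl_compat : ∀ x y b, tl (x * y) b = tl x (tr y b) * tl y b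

/-- The multiplication of the bicrossed product group `F ⋈ G`:
`(a, x) (b, y) = (a (x ▷ b), (x ◁ b) y)`. -/
def MatchedPair.bowtieMul {F G : Type*} [Group F] [Group G] (mp : MatchedPair F G)
    (p q : F × G) : F × G :=
  (p.1 * mp.tr p.2 q.1, mp.tl p.2 q.1 * q.2)

/-- Powers in the bicrossed product group `F ⋈ G`. -/
def MatchedPair.bowtiePow {F G : Type*} [Group F] [Group G] (mp : MatchedPair F G)
    (p : F × G) : ℕ → F × G
  | 0 => (1, 1)
  | n + 1 => mp.bowtieMul p (mp.bowtiePow p n)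

/-!
The normalized integral is `|G|⁻¹ Σ_y bas (y, 1)`: that element is a normalized right
integral, and a normalized left and a normalized right integral always agree. Expanding
Sweedler powers from the right, `ρ (bas (y, s)^{[n]})` maps each `e_z` to a basis vector or to
zero by a deterministic walk on `F × G`. Along the walk started at `(1, z)` the point
`(s, z ◁ a)` of `F ⋈ G` is multiplied on the left by the fixed element `((z ▷ a)⁻¹, y)` at every
step, so `e_z` contributes to the trace of `ρ (bas (y, 1)^{[n]})` exactly when
`((z ▷ a)⁻¹, y)^n = 1`. That element is conjugate in `F ⋈ G` to `(a, x)⁻¹` with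
`x = (z ◁ a)⁻¹ y⁻¹ z`, a bijective change of variable `y ↦ x` for each `z`.
-/

open WithConv

section Sweedler

variable {R A : Type*} [CommSemiring R] [Semiring A] [Bialgebra R A]

theorem sweedlerPower_eq_ofConv_pow (n : ℕ) :
    sweedlerPower R A n = (toConv (LinearMap.id : A →ₗ[R] A) ^ n).ofConv := by
  induction n with
  | zero => rfl
  | succ n ih => rw [pow_succ', LinearMap.convMul_def, ← ih]; rfl

theorem sweedlerPower_succ' (n : ℕ) :
    sweedlerPower R A (n + 1) = LinearMap.mul' R A ∘ₗ
      TensorProduct.map (sweedlerPower R A n) LinearMap.id ∘ₗ Coalgebra.comul := by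
  rw [sweedlerPower_eq_ofConv_pow, pow_succ, LinearMap.convMul_def, ← sweedlerPower_eq_ofConv_pow]

theorem IsNormalizedIntegral.eq_of_right_integral {Λ E : A} (hΛ : IsNormalizedIntegral R Λ)
    (hE : ∀ h : A, E * h = Coalgebra.counit (R := R) h • E)
    (hεE : Coalgebra.counit (R := R) E = 1) : Λ = E := by
  calc Λ = E * Λ := by rw [hΛ.1, hεE, one_smul]
    _ = E := by rw [hE, hΛ.2, one_smul]

end Sweedler

namespace MatchedPair

variable {F G : Type*} [Group F] [Group G]

@[ext]
structure Bicrossed (mp : MatchedPair F G) where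
  fst : F
  snd : G

namespace Bicrossed

variable {mp : MatchedPair F G}

instance : Group mp.Bicrossed where
  mul p q := ⟨p.fst * mp.tr p.snd q.fst, mp.tl p.snd q.fst * q.snd⟩
  one := ⟨1, 1⟩
  -- `(b x)⁻¹ = x⁻¹ b⁻¹`, brought back to the normal form `F · G`
  inv p := ⟨mp.tr p.snd⁻¹ p.fst⁻¹, mp.tl p.snd⁻¹ p.fst⁻¹⟩
  mul_assoc := fun ⟨a, x⟩ ⟨b, y⟩ ⟨c, z⟩ => by
    ext
    · change a * mp.tr x b * mp.tr (mp.tl x b * y) c = a * mp.tr x (b * mp.tr y c)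
      rw [mp.tr_mul_compat, mp.mul_tr, mul_assoc]
    · change mp.tl (mp.tl x b * y) c * z = mp.tl x (b * mp.tr y c) * (mp.tl y c * z)
      rw [mp.mul_tl_compat, mp.tl_mul, mul_assoc]
  one_mul := fun ⟨b, x⟩ => by
    ext
    · change 1 * mp.tr 1 b = b
      rw [mp.one_tr, one_mul]
    · change mp.tl 1 b * x = x
      rw [mp.one_tl, one_mul]
  mul_one := fun ⟨b, x⟩ => by
    ext
    · change b * mp.tr x 1 = b
      rw [mp.tr_one, mul_one]
    · change mp.tl x 1 * 1 = x
      rw [mp.tl_one, mul_one]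
  inv_mul_cancel := fun ⟨b, x⟩ => by
    ext
    · change mp.tr x⁻¹ b⁻¹ * mp.tr (mp.tl x⁻¹ b⁻¹) b = 1
      rw [← mp.tr_mul_compat, inv_mul_cancel, mp.tr_one]
    · change mp.tl (mp.tl x⁻¹ b⁻¹) b * x = 1
      rw [← mp.tl_mul, inv_mul_cancel, mp.tl_one, inv_mul_cancel]

@[simp] lemma mul_fst (p q : mp.Bicrossed) : (p * q).fst = p.fst * mp.tr p.snd q.fst := rfl
@[simp] lemma mul_snd (p q : mp.Bicrossed) : (p * q).snd = mp.tl p.snd q.fst * q.snd := rfl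
@[simp] lemma one_fst : (1 : mp.Bicrossed).fst = 1 := rfl
@[simp] lemma one_snd : (1 : mp.Bicrossed).snd = 1 := rfl

variable (mp) in
def inlHom : F →* mp.Bicrossed where
  toFun b := ⟨b, 1⟩
  map_one' := rfl
  map_mul' b c := by ext <;> simp [mp.one_tr, mp.one_tl]

variable (mp) in
def inrHom : G →* mp.Bicrossed where
  toFun x := ⟨1, x⟩
  map_one' := rfl
  map_mul' x z := by ext <;> simp [mp.tr_one, mp.tl_one]

lemma inlHom_mul_inrHom (b : F) (x : G) : inlHom mp b * inrHom mp x = ⟨b, x⟩ := by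
  ext <;> simp [inlHom, inrHom, mp.tr_one, mp.tl_one]

lemma inrHom_mul_inlHom (x : G) (b : F) :
    inrHom mp x * inlHom mp b = ⟨mp.tr x b, mp.tl x b⟩ := by
  ext <;> simp [inlHom, inrHom]

instance [DecidableEq F] [DecidableEq G] : DecidableEq mp.Bicrossed :=
  fun _ _ => decidable_of_iff _ Bicrossed.ext_iff.symm

end Bicrossed

variable (mp : MatchedPair F G)

lemma bowtiePow_eq_one_iff (p : F × G) (n : ℕ) :
    mp.bowtiePow p n = (1, 1) ↔ (⟨p.1, p.2⟩ : mp.Bicrossed) ^ n = 1 := by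
  have hpow : ∀ k, mp.bowtiePow p k =
      (((⟨p.1, p.2⟩ : mp.Bicrossed) ^ k).fst, ((⟨p.1, p.2⟩ : mp.Bicrossed) ^ k).snd) := by
    intro k
    induction k with
    | zero => rfl
    | succ k ih => rw [pow_succ', bowtiePow, ih]; rfl
  rw [hpow, Bicrossed.ext_iff, Prod.ext_iff]
  rfl

lemma tl_injective (b : F) : Function.Injective (mp.tl · b) := fun x x' h => by
  simpa [← mp.tl_mul, mp.tl_one] using congrArg (mp.tl · b⁻¹) h

lemma tr_eq_one_iff (x : G) (b : F) : mp.tr x b = 1 ↔ b = 1 := by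
  refine ⟨fun h => ?_, fun h => h ▸ mp.tr_one x⟩
  simpa [← mp.mul_tr, mp.one_tr, mp.tr_one] using congrArg (mp.tr x⁻¹) h

lemma tr_tl_mul (y z : G) (c a : F) :
    mp.tr (mp.tl y c * z) a = (mp.tr y c)⁻¹ * mp.tr y (c * mp.tr z a) := by
  rw [mp.mul_tr, mp.tr_mul_compat, inv_mul_cancel_left]

lemma tl_tl_mul (y z : G) (c a : F) :
    mp.tl (mp.tl y c * z) a = mp.tl y (c * mp.tr z a) * mp.tl z a := by
  rw [mp.mul_tl_compat, mp.tl_mul]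

/-- For fixed `y`, `bas (y, s)^{[n+1]} = Σ_c bas (y, c)^{[n]} bas (y ◁ c, c⁻¹ s)` and only the
summand with `c = s (z ▷ a)⁻¹` survives on `e_z`, sending it to `e_{(y ◁ c) z}`; so
`ρ (bas (y, s)^{[n]}) e_z` is computed by iterating `(s, z) ↦ (c, (y ◁ c) z)`. -/
def sweedlerStep (a : F) (y : G) (p : F × G) : F × G :=
  (p.1 * (mp.tr p.2 a)⁻¹, mp.tl y (p.1 * (mp.tr p.2 a)⁻¹) * p.2)

def sweedlerStepInvariant (a : F) (y : G) (p : F × G) : F :=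
  p.1 * (mp.tr p.2 a)⁻¹ * (mp.tr y p.1)⁻¹

def sweedlerStepPoint (a : F) (p : F × G) : mp.Bicrossed :=
  ⟨p.1, mp.tl p.2 a⟩

lemma sweedlerStepInvariant_sweedlerStep (a : F) (y : G) (p : F × G) :
    mp.sweedlerStepInvariant a y (mp.sweedlerStep a y p) = mp.sweedlerStepInvariant a y p := by
  simp only [sweedlerStepInvariant, sweedlerStep, tr_tl_mul, inv_mul_cancel_right]
  group

lemma sweedlerStepPoint_sweedlerStep (a : F) (y : G) (p : F × G) :
    mp.sweedlerStepPoint a (mp.sweedlerStep a y p) =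
      ⟨mp.sweedlerStepInvariant a y p, y⟩ * mp.sweedlerStepPoint a p := by
  ext
  · simp [sweedlerStepPoint, sweedlerStep, sweedlerStepInvariant]
  · simp [sweedlerStepPoint, sweedlerStep, tl_tl_mul]

lemma sweedlerStepPoint_iterate (a : F) (y : G) (k : ℕ) (p : F × G) :
    mp.sweedlerStepPoint a ((mp.sweedlerStep a y)^[k] p) =
      ⟨mp.sweedlerStepInvariant a y p, y⟩ ^ k * mp.sweedlerStepPoint a p := by
  induction k generalizing p with
  | zero => simp
  | succ k ih =>
    rw [Function.iterate_succ_apply, ih, sweedlerStepInvariant_sweedlerStep,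
      sweedlerStepPoint_sweedlerStep, pow_succ, mul_assoc]

lemma sweedlerStepPoint_injective (a : F) : Function.Injective (mp.sweedlerStepPoint a) :=
  fun _ _ h => Prod.ext (congrArg Bicrossed.fst h) (mp.tl_injective a (congrArg Bicrossed.snd h))

lemma iterate_sweedlerStep_eq_iff (a : F) (y z : G) (n : ℕ) :
    (mp.sweedlerStep a y)^[n] (1, z) = (1, z) ↔
      (⟨(mp.tr z a)⁻¹, y⟩ : mp.Bicrossed) ^ n = 1 := by
  rw [← (mp.sweedlerStepPoint_injective a).eq_iff, sweedlerStepPoint_iterate, mul_eq_right]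
  simp [sweedlerStepInvariant, mp.tr_one]

lemma mk_inv_tr_eq_conj (a : F) (y z : G) :
    (⟨(mp.tr z a)⁻¹, y⟩ : mp.Bicrossed) =
      (Bicrossed.inrHom mp (mp.tl z a) * Bicrossed.inlHom mp a⁻¹) *
        (⟨a, (mp.tl z a)⁻¹ * y⁻¹ * z⟩ : mp.Bicrossed)⁻¹ *
        (Bicrossed.inrHom mp (mp.tl z a) * Bicrossed.inlHom mp a⁻¹)⁻¹ := by
  have h : Bicrossed.inlHom mp (mp.tr z a) =
      Bicrossed.inrHom mp z * Bicrossed.inlHom mp a * (Bicrossed.inrHom mp (mp.tl z a))⁻¹ := by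
    rw [Bicrossed.inrHom_mul_inlHom, ← Bicrossed.inlHom_mul_inrHom, mul_inv_cancel_right]
  rw [← Bicrossed.inlHom_mul_inrHom, ← Bicrossed.inlHom_mul_inrHom, map_inv, h]
  simp only [map_mul, map_inv]
  group

lemma card_pow_eq_one_mk_inv_tr [Fintype G] [DecidableEq F] [DecidableEq G]
    (a : F) (z : G) (n : ℕ) :
    (Finset.univ.filter fun y : G => (⟨(mp.tr z a)⁻¹, y⟩ : mp.Bicrossed) ^ n = 1).card =
      (Finset.univ.filter fun x : G => (⟨a, x⟩ : mp.Bicrossed) ^ n = 1).card := by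
  refine Finset.card_equiv ((Equiv.inv G).trans
    ((Equiv.mulLeft (mp.tl z a)⁻¹).trans (Equiv.mulRight z))) fun y => ?_
  simp only [Finset.mem_filter, Finset.mem_univ, true_and, Equiv.trans_apply, Equiv.inv_apply,
    Equiv.coe_mulLeft, Equiv.coe_mulRight]
  rw [mk_inv_tr_eq_conj, conj_pow, conj_eq_one_iff, inv_pow, inv_eq_one]

end MatchedPair

theorem _root_.LinearMap.trace_eq_sum_apply_single {R ι : Type*} [CommSemiring R] [Fintype ι]
    [DecidableEq ι] (f : (ι → R) →ₗ[R] ι → R) :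
    LinearMap.trace R (ι → R) f = ∑ i, f (Pi.single i 1) i := by
  rw [LinearMap.trace_eq_matrix_trace R (Pi.basisFun R ι), LinearMap.toMatrix_eq_toMatrix']
  rfl

section BismashModule

open MatchedPair

variable {F G : Type*} [Group F] [Group G]
  {mp : MatchedPair F G} {K : Type*} [Semiring K] [Bialgebra ℂ K]
  {bas : Module.Basis (G × F) ℂ K}

lemma sum_basis_mul_basis [Fintype G] [DecidableEq F]
    (hmul : ∀ (y z : G) (s t : F),
      bas (y, s) * bas (z, t) = if s = mp.tr z t then bas (y * z, t) else 0) (z : G) (t : F) :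
    (∑ y, bas (y, 1)) * bas (z, t) = if t = 1 then ∑ y, bas (y, 1) else 0 := by
  simp only [Finset.sum_mul, hmul, eq_comm (a := (1 : F)), mp.tr_eq_one_iff]
  split_ifs
  · subst_vars
    exact Equiv.sum_comp (Equiv.mulRight z) fun y => bas (y, 1)
  · simp

lemma IsNormalizedIntegral.eq_inv_card_smul_sum_basis [Fintype G] [DecidableEq F]
    (hmul : ∀ (y z : G) (s t : F),
      bas (y, s) * bas (z, t) = if s = mp.tr z t then bas (y * z, t) else 0)
    (hcounit : ∀ (y : G) (s : F),
      Coalgebra.counit (R := ℂ) (bas (y, s)) = if s = 1 then (1 : ℂ) else 0)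
    {Λ : K} (hΛ : IsNormalizedIntegral ℂ Λ) :
    Λ = (Fintype.card G : ℂ)⁻¹ • ∑ y, bas (y, 1) := by
  refine hΛ.eq_of_right_integral (fun h => ?_) ?_
  · have hbasis : LinearMap.mulLeft ℂ ((Fintype.card G : ℂ)⁻¹ • ∑ y, bas (y, 1)) =
        Coalgebra.counit.smulRight ((Fintype.card G : ℂ)⁻¹ • ∑ y, bas (y, 1)) :=
      bas.ext fun ⟨z, t⟩ => by
        simp only [LinearMap.mulLeft_apply, LinearMap.smulRight_apply, smul_mul_assoc,
          sum_basis_mul_basis hmul, hcounit]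
        split_ifs <;> simp
    exact LinearMap.congr_fun hbasis h
  · simp [hcounit, Fintype.card_ne_zero]

lemma sweedlerPower_succ_basis [Fintype F]
    (hcomul : ∀ (y : G) (s : F),
      Coalgebra.comul (R := ℂ) (bas (y, s)) =
        ∑ b : F, bas (y, b) ⊗ₜ[ℂ] bas (mp.tl y b, b⁻¹ * s)) (n : ℕ) (y : G) (s : F) :
    sweedlerPower ℂ K (n + 1) (bas (y, s)) =
      ∑ c, sweedlerPower ℂ K n (bas (y, c)) * bas (mp.tl y c, c⁻¹ * s) := by
  simp [sweedlerPower_succ', hcomul]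

lemma rho_sweedlerPower_basis_single [Fintype F] [DecidableEq F] [DecidableEq G] {a : F}
    (hcomul : ∀ (y : G) (s : F),
      Coalgebra.comul (R := ℂ) (bas (y, s)) =
        ∑ b : F, bas (y, b) ⊗ₜ[ℂ] bas (mp.tl y b, b⁻¹ * s))
    (hcounit : ∀ (y : G) (s : F),
      Coalgebra.counit (R := ℂ) (bas (y, s)) = if s = 1 then (1 : ℂ) else 0)
    {ρ : K →ₐ[ℂ] Module.End ℂ (G → ℂ)}
    (hρ : ∀ (y z : G) (s : F),
      ρ (bas (y, s)) (Pi.single z 1) =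
        if s = mp.tr z a then Pi.single (y * z) (1 : ℂ) else 0)
    (n : ℕ) (y z : G) (s : F) :
    ρ (sweedlerPower ℂ K n (bas (y, s))) (Pi.single z 1) =
      if ((mp.sweedlerStep a y)^[n] (s, z)).1 = 1
      then Pi.single ((mp.sweedlerStep a y)^[n] (s, z)).2 1 else 0 := by
  induction n generalizing s z with
  | zero =>
    by_cases hs : s = 1 <;> simp [sweedlerPower, hcounit, hs]
  | succ n ih =>
    rw [sweedlerPower_succ_basis hcomul, map_sum, LinearMap.sum_apply,
      Finset.sum_eq_single (s * (mp.tr z a)⁻¹), map_mul, Module.End.mul_apply, hρ,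
      if_pos (by group), ih, Function.iterate_succ_apply]
    · rfl
    · intro c _ hc
      rw [map_mul, Module.End.mul_apply, hρ, if_neg, map_zero]
      intro h
      exact hc (eq_mul_inv_of_mul_eq (by rw [← h, mul_inv_cancel_left]))
    · simp

lemma trace_rho_sweedlerPower_basis [Fintype F] [Fintype G] [DecidableEq F] [DecidableEq G] {a : F}
    (hcomul : ∀ (y : G) (s : F),
      Coalgebra.comul (R := ℂ) (bas (y, s)) =
        ∑ b : F, bas (y, b) ⊗ₜ[ℂ] bas (mp.tl y b, b⁻¹ * s))
    (hcounit : ∀ (y : G) (s : F),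
      Coalgebra.counit (R := ℂ) (bas (y, s)) = if s = 1 then (1 : ℂ) else 0)
    {ρ : K →ₐ[ℂ] Module.End ℂ (G → ℂ)}
    (hρ : ∀ (y z : G) (s : F),
      ρ (bas (y, s)) (Pi.single z 1) =
        if s = mp.tr z a then Pi.single (y * z) (1 : ℂ) else 0)
    (n : ℕ) (y : G) :
    LinearMap.trace ℂ (G → ℂ) (ρ (sweedlerPower ℂ K n (bas (y, 1)))) =
      ∑ z, if (⟨(mp.tr z a)⁻¹, y⟩ : mp.Bicrossed) ^ n = 1 then 1 else 0 := by
  refine (LinearMap.trace_eq_sum_apply_single _).trans (Finset.sum_congr rfl fun z _ => ?_)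
  simp only [rho_sweedlerPower_basis_single hcomul hcounit hρ, ← iterate_sweedlerStep_eq_iff,
    Prod.ext_iff]
  by_cases h : ((mp.sweedlerStep a y)^[n] (1, z)).1 = 1 <;> simp [h, Pi.single_apply, eq_comm]

end BismashModule

theorem nu_bismash_module_general {F G : Type*} [Group F] [Group G]
    [Fintype F] [Fintype G] [DecidableEq F] [DecidableEq G]
    (mp : MatchedPair F G) (a : F)
    -- the bismash product Hopf algebra, presented by its structure constants:
    (K : Type*) [Ring K] [HopfAlgebra ℂ K]
    (bas : Module.Basis (G × F) ℂ K)
    (hmul : ∀ (y z : G) (s t : F),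
      bas (y, s) * bas (z, t) = if s = mp.tr z t then bas (y * z, t) else 0)
    (hcomul : ∀ (y : G) (s : F),
      Coalgebra.comul (R := ℂ) (bas (y, s)) =
        ∑ b : F, bas (y, b) ⊗ₜ[ℂ] bas (mp.tl y b, b⁻¹ * s))
    (hcounit : ∀ (y : G) (s : F),
      Coalgebra.counit (R := ℂ) (bas (y, s)) = if s = 1 then (1 : ℂ) else 0)
    -- the normalized integral of `K`:
    (Λ : K) (hΛ : IsNormalizedIntegral ℂ Λ)
    -- the module `ℂ^G # p_a`, presented by its action on the standard basis:
    (ρ : K →ₐ[ℂ] Module.End ℂ (G → ℂ))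
    (hρ : ∀ (y z : G) (s : F),
      ρ (bas (y, s)) (Pi.single z 1) =
        if s = mp.tr z a then Pi.single (y * z) (1 : ℂ) else 0)
    (n : ℕ) :
    nuRep Λ ρ n =
      ((Finset.univ.filter fun x : G => mp.bowtiePow (a, x) n = (1, 1)).card : ℂ) := by
  have hG : (Fintype.card G : ℂ) ≠ 0 := Nat.cast_ne_zero.mpr Fintype.card_ne_zero
  calc nuRep Λ ρ n
      = (Fintype.card G : ℂ)⁻¹ * ∑ y, ∑ z,
          if (⟨(mp.tr z a)⁻¹, y⟩ : mp.Bicrossed) ^ n = 1 then 1 else 0 := by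
        simp only [nuRep, hΛ.eq_inv_card_smul_sum_basis hmul hcounit, map_smul, map_sum,
          smul_eq_mul, trace_rho_sweedlerPower_basis hcomul hcounit hρ]
    _ = (Fintype.card G : ℂ)⁻¹ * ∑ _z : G,
          ((Finset.univ.filter fun x : G => (⟨a, x⟩ : mp.Bicrossed) ^ n = 1).card : ℂ) := by
        rw [Finset.sum_comm]
        simp only [Finset.sum_boole, mp.card_pow_eq_one_mk_inv_tr]
    _ = _ := by
        rw [Finset.sum_const, Finset.card_univ, nsmul_eq_mul, inv_mul_cancel_left₀ hG]
        simp only [mp.bowtiePow_eq_one_iff]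

/-- **(Proposition 5.8.)**  For a matched pair `(F, G, ▷, ◁)` of finite groups, the
`n`-th Frobenius–Schur indicator of the `ℂ^G#ℂF`-module `ℂ^G # p_a` equals the
number of `x ∈ G` with `(a, x)^n = (1, 1)` in `F ⋈ G`. -/
theorem nu_bismash_module {F G : Type*} [Group F] [Group G]
    [Fintype F] [Fintype G] [DecidableEq F] [DecidableEq G]
    (mp : MatchedPair F G) (a : F)
    -- the bismash product Hopf algebra, presented by its structure constants:
    (K : Type*) [Ring K] [HopfAlgebra ℂ K] [IsSemisimpleRing K]
    (bas : Module.Basis (G × F) ℂ K)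
    (hmul : ∀ (y z : G) (s t : F),
      bas (y, s) * bas (z, t) = if s = mp.tr z t then bas (y * z, t) else 0)
    (hcomul : ∀ (y : G) (s : F),
      Coalgebra.comul (R := ℂ) (bas (y, s)) =
        ∑ b : F, bas (y, b) ⊗ₜ[ℂ] bas (mp.tl y b, b⁻¹ * s))
    (hcounit : ∀ (y : G) (s : F),
      Coalgebra.counit (R := ℂ) (bas (y, s)) = if s = 1 then (1 : ℂ) else 0)
    -- the normalized integral of `K`:
    (Λ : K) (hΛ : IsNormalizedIntegral ℂ Λ)
    -- the module `ℂ^G # p_a`, presented by its action on the standard basis: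
    (ρ : K →ₐ[ℂ] Module.End ℂ (G → ℂ))
    (hρ : ∀ (y z : G) (s : F),
      ρ (bas (y, s)) (Pi.single z 1) =
        if s = mp.tr z a then Pi.single (y * z) (1 : ℂ) else 0)
    (n : ℕ) (hn : 0 < n) :
    nuRep Λ ρ n =
      ((Finset.univ.filter fun x : G => mp.bowtiePow (a, x) n = (1, 1)).card : ℂ) :=
  nu_bismash_module_general mp a K bas hmul hcomul hcounit Λ hΛ ρ hρ n

end FSIndicator
end
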